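/- arXiv:2005.03192 — 3 statements merged into one kernel-verified Lean document; each statement's English description precedes it below -/
import Mathlib

section
/- Consider the toggle-switch dynamics on a directed graph where every vertex has out-degree exactly 2 (from state (v, b), the token moves to succ_{b(v)}(v) and flips b(v)). If the token starting from vertex s (with all bits false) visits some vertex v infinitely often, then the token visits both out-neighbors of v infinitely often. -/
/-- The toggle-switch dynamics. -/
def toggleStep {V : Type*} [DecidableEq V] (succ0 succ1 : V → V) :
    V × (V → Bool) → V × (V → Bool) :=
  fun p => ((if p.2 p.1 then succ1 p.1 else succ0 p.1),
            Function.update p.2 p.1 (!p.2 p.1))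

section aux

variable {V : Type*} [DecidableEq V] (succ0 succ1 : V → V)

private lemma toggleStep_fst (p : V × (V → Bool)) :
    (toggleStep succ0 succ1 p).1 = if p.2 p.1 then succ1 p.1 else succ0 p.1 := rfl

private lemma toggleStep_snd (p : V × (V → Bool)) (v : V) :
    (toggleStep succ0 succ1 p).2 v = if p.1 = v then !p.2 v else p.2 v := by
  simp only [toggleStep, Function.update_apply]
  by_cases h : v = p.1 <;> simp [h, eq_comm]

/-- If the token never sits at `v` during `[m, n)`, the bit at `v` is unchanged. -/
private lemma bit_const (x : V × (V → Bool)) (v : V) :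
    ∀ n m, m ≤ n → (∀ k, m ≤ k → k < n →
      ((toggleStep succ0 succ1)^[k] x).1 ≠ v) →
      ((toggleStep succ0 succ1)^[n] x).2 v = ((toggleStep succ0 succ1)^[m] x).2 v := by
  intro n
  induction n with
  | zero => intro m hm _; simp [Nat.le_zero.mp hm]
  | succ n ih =>
    intro m hm hne
    rcases Nat.lt_or_ge m (n+1) with h | h
    · have hmn : m ≤ n := Nat.lt_succ_iff.mp h
      rw [Function.iterate_succ_apply', toggleStep_snd,
        if_neg (hne n hmn (Nat.lt_succ_self n))]
      exact ih m hmn (fun k hk1 hk2 => hne k hk1 (Nat.lt_succ_of_lt hk2))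
    · have : m = n + 1 := le_antisymm hm h
      rw [this]

/-- From any time, there is a later visit to `v` with either prescribed bit value. -/
private lemma visit_with_bit (s v : V)
    (hvisit : ∀ N, ∃ n > N,
      ((toggleStep succ0 succ1)^[n] (s, fun _ => false)).1 = v) :
    ∀ N (b : Bool), ∃ n > N,
      ((toggleStep succ0 succ1)^[n] (s, fun _ => false)).1 = v ∧
      ((toggleStep succ0 succ1)^[n] (s, fun _ => false)).2 v = b := by
  intro N b
  set x : V × (V → Bool) := (s, fun _ => false) with hx
  obtain ⟨n1, hn1, hv1⟩ := hvisit N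
  by_cases hb : ((toggleStep succ0 succ1)^[n1] x).2 v = b
  · exact ⟨n1, hn1, hv1, hb⟩
  · -- take the least visit after n1
    have hex : ∃ n, n > n1 ∧ ((toggleStep succ0 succ1)^[n] x).1 = v := hvisit n1
    classical
    set n2 := Nat.find hex with hn2def
    obtain ⟨hn2, hv2⟩ := Nat.find_spec hex
    have hnone : ∀ k, n1 + 1 ≤ k → k < n2 →
        ((toggleStep succ0 succ1)^[k] x).1 ≠ v := by
      intro k hk1 hk2 hkv
      exact Nat.find_min hex hk2 ⟨hk1, hkv⟩
    have h1 : ((toggleStep succ0 succ1)^[n2] x).2 v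
        = ((toggleStep succ0 succ1)^[n1 + 1] x).2 v :=
      bit_const succ0 succ1 x v n2 (n1 + 1) hn2 hnone
    have h2 : ((toggleStep succ0 succ1)^[n1 + 1] x).2 v
        = !((toggleStep succ0 succ1)^[n1] x).2 v := by
      rw [Function.iterate_succ_apply', toggleStep_snd, if_pos hv1]
    refine ⟨n2, lt_trans hn1 hn2, hv2, ?_⟩
    rw [h1, h2]
    cases b <;> simp_all

end aux

/-- if the token started at `s` (all bits false) visits `v` infinitely
often, then it visits both out-neighbors of `v` infinitely often. -/
theorem stmt2 {V : Type*} [DecidableEq V] (succ0 succ1 : V → V) (s v : V)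
    (hvisit : ∀ N, ∃ n > N,
      ((toggleStep succ0 succ1)^[n] (s, fun _ => false)).1 = v) :
    (∀ N, ∃ n > N,
      ((toggleStep succ0 succ1)^[n] (s, fun _ => false)).1 = succ0 v) ∧
    (∀ N, ∃ n > N,
      ((toggleStep succ0 succ1)^[n] (s, fun _ => false)).1 = succ1 v) := by
  constructor <;> intro N
  · obtain ⟨n, hn, hv, hb⟩ := visit_with_bit succ0 succ1 s v hvisit N false
    refine ⟨n + 1, Nat.lt_succ_of_lt hn, ?_⟩
    rw [Function.iterate_succ_apply', toggleStep_fst, hv, hb]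
    simp
  · obtain ⟨n, hn, hv, hb⟩ := visit_with_bit succ0 succ1 s v hvisit N true
    refine ⟨n + 1, Nat.lt_succ_of_lt hn, ?_⟩
    rw [Function.iterate_succ_apply', toggleStep_fst, hv, hb]
    simp
end

section
/- Consequently, any maximal walk from the start vertex respecting a controlled switching flow f reaches the goal vertex in at most (sum over e of f(e)) steps. -/
lemma walk_balance {V E : Type*} [Fintype E] [DecidableEq V] [DecidableEq E]
    (src tgt : E → V) :
    ∀ (w : List E) (s : V), (∀ e ∈ w.head?, src e = s) →
      List.Chain' (fun e e' => tgt e = src e') w →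
      ∀ u : V,
      (∑ e : E, if src e = u then w.count e else 0) + (if u = w.getLast?.elim s tgt then 1 else 0) =
      (∑ e : E, if tgt e = u then w.count e else 0) + (if u = s then 1 else 0) := by
  intro w
  induction w with
  | nil => intro s _ _ u; simp; congr
  | cons e w ih =>
    intro s hs hc u
    have hse : src e = s := hs e rfl
    have hchain' : List.Chain' (fun e e' => tgt e = src e') w :=
      (List.isChain_cons.mp hc).2
    have hhd : ∀ e' ∈ w.head?, src e' = tgt e := by
      intro e' he'
      exact ((List.isChain_cons.mp hc).1 e' he').symm
    have hlast : (e :: w).getLast?.elim s tgt = w.getLast?.elim (tgt e) tgt := by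
      cases w with
      | nil => simp
      | cons x xs =>
        obtain ⟨y, hy⟩ := Option.isSome_iff_exists.mp
          (List.getLast?_isSome.mpr (List.cons_ne_nil x xs))
        rw [List.getLast?_cons_cons, hy]
        rfl
    have IH := ih (tgt e) hhd hchain' u
    have hcnt : ∀ e' : E, (e :: w).count e' = w.count e' + (if e' = e then 1 else 0) := by
      intro e'
      simp only [List.count_cons, beq_iff_eq]
      by_cases h : e' = e
      · subst h; simp
      · simp [h, Ne.symm h]
    have hout : (∑ e' : E, if src e' = u then (e :: w).count e' else 0) =
        (∑ e' : E, if src e' = u then w.count e' else 0) + (if src e = u then 1 else 0) := by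
      simp only [hcnt]
      have split : ∀ x : E, (if src x = u then w.count x + (if x = e then 1 else 0) else 0)
          = (if src x = u then w.count x else 0) +
            (if x = e then (if src x = u then 1 else 0) else 0) := by
        intro x; split_ifs <;> omega
      simp only [split]
      rw [Finset.sum_add_distrib,
        Finset.sum_ite_eq' Finset.univ e (fun x => if src x = u then 1 else 0)]
      simp
    have hin : (∑ e' : E, if tgt e' = u then (e :: w).count e' else 0) =
        (∑ e' : E, if tgt e' = u then w.count e' else 0) + (if tgt e = u then 1 else 0) := by
      simp only [hcnt]
      have split : ∀ x : E, (if tgt x = u then w.count x + (if x = e then 1 else 0) else 0)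
          = (if tgt x = u then w.count x else 0) +
            (if x = e then (if tgt x = u then 1 else 0) else 0) := by
        intro x; split_ifs <;> omega
      simp only [split]
      rw [Finset.sum_add_distrib,
        Finset.sum_ite_eq' Finset.univ e (fun x => if tgt x = u then 1 else 0)]
      simp
    rw [hout, hin, hlast]
    have h1 : (if src e = u then (1:ℕ) else 0) = (if u = s then (1:ℕ) else 0) := by
      rw [hse]
      rcases eq_or_ne u s with h | h
      · simp [h]
      · simp [h, Ne.symm h]
    have h2 : (if tgt e = u then (1:ℕ) else 0) = (if u = tgt e then (1:ℕ) else 0) := by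
      rcases eq_or_ne u (tgt e) with h | h
      · simp [h]
      · simp [h, Ne.symm h]
    omega

lemma length_eq_sum_count {E : Type*} [Fintype E] [DecidableEq E] (w : List E) :
    w.length = ∑ e : E, w.count e := by
  induction w with
  | nil => simp
  | cons x xs ih =>
    simp only [List.length_cons, List.count_cons, beq_iff_eq, ih]
    rw [Finset.sum_add_distrib,
      Finset.sum_ite_eq Finset.univ x (fun _ => (1:ℕ))]
    simp

/-- every maximal walk from `a` respecting a controlled switching flow `f`
ends at the goal `z`, and its length is at most `∑ e, f e`. -/
theorem stmt8 {V E : Type*} [Fintype E] [DecidableEq V] [DecidableEq E]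
    (src tgt : E → V) (f : E → ℕ) (a z : V) (haz : a ≠ z)
    (hflow : ∀ v : V,
      (∑ e : E, if src e = v then f e else 0) + (if v = z then 1 else 0) =
      (∑ e : E, if tgt e = v then f e else 0) + (if v = a then 1 else 0))
    (w : List E)
    (hstart : ∀ e ∈ w.head?, src e = a)
    (hchain : List.Chain' (fun e e' => tgt e = src e') w)
    (hcount : ∀ e : E, w.count e ≤ f e)
    (hmax : ¬ ∃ e' : E, src e' = w.getLast?.elim a tgt ∧ w.count e' < f e') :
    w.getLast?.elim a tgt = z ∧ w.length ≤ ∑ e : E, f e := by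
  set v := w.getLast?.elim a tgt with hv
  push_neg at hmax
  have hsat : ∀ e : E, src e = v → w.count e = f e := fun e he =>
    le_antisymm (hcount e) (hmax e he)
  have hbal := walk_balance src tgt w a hstart hchain v
  rw [← hv] at hbal
  simp only [if_pos rfl] at hbal
  have houteq : (∑ e : E, if src e = v then w.count e else 0) =
      (∑ e : E, if src e = v then f e else 0) := by
    apply Finset.sum_congr rfl
    intro e _
    by_cases h : src e = v
    · simp [h, hsat e h]
    · simp [h]
  have hinle : (∑ e : E, if tgt e = v then w.count e else 0) ≤
      (∑ e : E, if tgt e = v then f e else 0) := by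
    apply Finset.sum_le_sum
    intro e _
    by_cases h : tgt e = v <;> simp [h, hcount e]
  have hfv := hflow v
  have hvz : v = z := by
    by_contra h
    split_ifs at hbal hfv <;> omega
  refine ⟨hvz, ?_⟩
  rw [length_eq_sum_count]
  exact Finset.sum_le_sum fun e _ => hcount e
end

section
/- Consider the counter dynamics on states in Fin(2^(k+1)) with two operations: increment x -> x + 1 (mod 2^(k+1)), and reflect x -> -x - 1 (mod 2^(k+1)), i.e., x -> 2^(k+1) - 1 - x. Starting from x = 2^k, any sequence of at most 2^k - 1 operations (in any order) never reaches the state 0. -/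
private lemma stmt10_aux (n : ℕ) [NeZero n] (hn : 1 < n)
    (ops : List (ZMod n → ZMod n))
    (hops : ∀ g ∈ ops, g = (fun x => x + 1) ∨ g = (fun x => -x - 1)) :
    ∀ x : ZMod n, min x.val (n - x.val) ≤
      min (ops.foldl (fun x g => g x) x).val (n - (ops.foldl (fun x g => g x) x).val)
        + ops.length := by
  haveI : Fact (1 < n) := ⟨hn⟩
  induction ops with
  | nil => intro x; simp
  | cons g t ih =>
    intro x
    have hxlt : x.val < n := ZMod.val_lt x
    have key : min x.val (n - x.val) ≤ min (g x).val (n - (g x).val) + 1 := by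
      rcases hops g List.mem_cons_self with hg | hg
      · subst hg
        have h1 : (x + 1).val = (x.val + 1) % n := by
          rw [ZMod.val_add, ZMod.val_one]
        rcases Nat.lt_or_ge (x.val + 1) n with h | h
        · rw [h1, Nat.mod_eq_of_lt h]; omega
        · have hx : x.val + 1 = n := by omega
          rw [h1, hx, Nat.mod_self]; omega
      · subst hg
        have h1 : -x - 1 = -(x + 1) := by ring
        have hadd : (x + 1).val = (x.val + 1) % n := by
          rw [ZMod.val_add, ZMod.val_one]
        rcases Nat.lt_or_ge (x.val + 1) n with h | h
        · have hne : x + 1 ≠ 0 := by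
            intro hc
            have : (x + 1).val = 0 := by rw [hc, ZMod.val_zero]
            rw [hadd, Nat.mod_eq_of_lt h] at this
            omega
          have h2 : (-x - 1).val = n - (x + 1).val := by
            rw [h1, ZMod.neg_val, if_neg hne]
          have h3 : (x + 1).val = x.val + 1 := by
            rw [hadd, Nat.mod_eq_of_lt h]
          rw [h2, h3]; omega
        · have hxv : x.val + 1 = n := by omega
          have hx1 : x + 1 = 0 := by
            rw [← ZMod.val_eq_zero, hadd, hxv, Nat.mod_self]
          have h2 : (-x - 1).val = 0 := by rw [h1, hx1, neg_zero, ZMod.val_zero]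
          rw [h2]; omega
    have ht := ih (fun g' hg' => hops g' (List.mem_cons_of_mem _ hg')) (g x)
    rw [List.foldl_cons, List.length_cons]
    generalize hv : (t.foldl (fun x g => g x) (g x)).val = v at ht ⊢
    clear ih hops hv
    omega

/-- starting from `2^k` in `ℤ/2^(k+1)ℤ`, any sequence of at most
`2^k - 1` operations, each either increment (`x ↦ x + 1`) or reflect (`x ↦ -x - 1`),
never reaches `0`. -/
theorem stmt10 (k : ℕ) (ops : List (ZMod (2 ^ (k + 1)) → ZMod (2 ^ (k + 1))))
    (hops : ∀ g ∈ ops, g = (fun x => x + 1) ∨ g = (fun x => -x - 1))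
    (hlen : ops.length ≤ 2 ^ k - 1) :
    ops.foldl (fun x g => g x) ((2 ^ k : ℕ) : ZMod (2 ^ (k + 1))) ≠ 0 := by
  have hn2 : 1 < 2 ^ (k + 1) := by
    have : 2 ^ 1 ≤ 2 ^ (k + 1) := Nat.pow_le_pow_right (by norm_num) (by omega)
    omega
  haveI : NeZero (2 ^ (k + 1)) := ⟨by omega⟩
  have hpow : 2 ^ (k + 1) = 2 ^ k + 2 ^ k := by rw [pow_succ]; omega
  have hpk : 0 < 2 ^ k := Nat.pow_pos (by norm_num)
  have hstart : ((2 ^ k : ℕ) : ZMod (2 ^ (k + 1))).val = 2 ^ k := by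
    rw [ZMod.val_natCast, Nat.mod_eq_of_lt]; omega
  have h := stmt10_aux (2 ^ (k + 1)) hn2 ops hops ((2 ^ k : ℕ) : ZMod (2 ^ (k + 1)))
  intro hc
  rw [hc, ZMod.val_zero, hstart] at h
  simp at h
  omega
end
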